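/- arXiv:2512.21442 — 5 statements merged into one kernel-verified Lean document; each statement's English description precedes it below -/
import Mathlib

section
/- In a complete CAT(0) metric space, every nonempty bounded subset admits a unique circumcenter, i.e., a unique point x such that the closed ball of radius r(B) centered at x contains B, where r(B) = inf_{x} sup_{y in B} d(x,y) is the circumradius. -/
open Metric

variable {X : Type*} [MetricSpace X]

/-- Supremum of distances from `x` to points of `B`. -/
noncomputable def supDist (B : Set X) (x : X) : ℝ := ⨆ y : B, dist x (y : X)

/-- The circumradius of `B`. -/
noncomputable def circumradius (B : Set X) : ℝ := ⨅ x : X, supDist B x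

/-- `x` is a circumcenter of `B`. -/
def IsCircumcenter (B : Set X) (x : X) : Prop := ∀ y ∈ B, dist x y ≤ circumradius B

/-- The semiparallelogram law. -/
def SemiparLaw (X : Type*) [MetricSpace X] : Prop :=
  ∀ x1 x2 : X, ∃ z : X, ∀ x : X,
    dist x1 x2 ^ 2 + 4 * dist z x ^ 2 ≤ 2 * dist x x1 ^ 2 + 2 * dist x x2 ^ 2

section Aux

variable {B : Set X}

lemma supDist_nonneg' (B : Set X) (x : X) : 0 ≤ supDist B x :=
  Real.iSup_nonneg fun _ => dist_nonneg

lemma bddAbove_aux (hbd : Bornology.IsBounded B) (x : X) :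
    BddAbove (Set.range fun y : B => dist x (y : X)) := by
  obtain ⟨C, hC⟩ := hbd.subset_closedBall x
  refine ⟨C, ?_⟩
  rintro _ ⟨y, rfl⟩
  have := hC y.2
  rw [mem_closedBall] at this
  simpa [dist_comm] using this

lemma dist_le_supDist (hbd : Bornology.IsBounded B) {y : X} (hy : y ∈ B) (x : X) :
    dist x y ≤ supDist B x :=
  le_ciSup (bddAbove_aux hbd x) ⟨y, hy⟩

lemma supDist_le (hne : B.Nonempty) {x : X} {c : ℝ} (h : ∀ y ∈ B, dist x y ≤ c) :
    supDist B x ≤ c := by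
  haveI : Nonempty B := hne.to_subtype
  exact ciSup_le fun y => h y y.2

lemma circumradius_nonneg (hne : B.Nonempty) : 0 ≤ circumradius B := by
  haveI : Nonempty X := ⟨hne.some⟩
  exact le_ciInf fun x => supDist_nonneg' B x

lemma circumradius_le (B : Set X) (x : X) : circumradius B ≤ supDist B x :=
  ciInf_le ⟨0, by rintro _ ⟨x, rfl⟩; exact supDist_nonneg' B x⟩ x

lemma key_ineq (hX : SemiparLaw X) (hne : B.Nonempty) (hbd : Bornology.IsBounded B)
    (x1 x2 : X) :
    dist x1 x2 ^ 2 + 4 * circumradius B ^ 2 ≤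
      2 * supDist B x1 ^ 2 + 2 * supDist B x2 ^ 2 := by
  obtain ⟨z, hz⟩ := hX x1 x2
  set s1 := supDist B x1 with hs1def
  set s2 := supDist B x2 with hs2def
  set A : ℝ := (2 * s1 ^ 2 + 2 * s2 ^ 2 - dist x1 x2 ^ 2) / 4 with hAdef
  have hptwise : ∀ y ∈ B, dist z y ^ 2 ≤ A := by
    intro y hy
    have h1 : dist y x1 ≤ s1 := by rw [dist_comm]; exact dist_le_supDist hbd hy x1
    have h2 : dist y x2 ≤ s2 := by rw [dist_comm]; exact dist_le_supDist hbd hy x2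
    have h1' : dist y x1 ^ 2 ≤ s1 ^ 2 := pow_le_pow_left₀ dist_nonneg h1 2
    have h2' : dist y x2 ^ 2 ≤ s2 ^ 2 := pow_le_pow_left₀ dist_nonneg h2 2
    have := hz y
    rw [hAdef]
    linarith
  obtain ⟨y0, hy0⟩ := hne
  have hA0 : 0 ≤ A := le_trans (sq_nonneg _) (hptwise y0 hy0)
  have hzA : supDist B z ≤ Real.sqrt A :=
    supDist_le ⟨y0, hy0⟩ fun y hy => Real.le_sqrt_of_sq_le (hptwise y hy)
  have hr : circumradius B ≤ Real.sqrt A := (circumradius_le B z).trans hzA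
  have hr2 : circumradius B ^ 2 ≤ A := by
    calc circumradius B ^ 2 ≤ Real.sqrt A ^ 2 :=
          pow_le_pow_left₀ (circumradius_nonneg ⟨y0, hy0⟩) hr 2
      _ = A := Real.sq_sqrt hA0
  rw [hAdef] at hr2
  linarith

end Aux

/-- In a complete CAT(0) metric space, every nonempty bounded subset admits a unique
circumcenter. -/
theorem stmt0 [CompleteSpace X] (hX : SemiparLaw X) (B : Set X) (hne : B.Nonempty)
    (hbd : Bornology.IsBounded B) : ∃! x : X, IsCircumcenter B x := by
  haveI : Nonempty X := ⟨hne.some⟩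
  have hr0 : 0 ≤ circumradius B := circumradius_nonneg hne
  set r := circumradius B with hrdef
  -- choose a minimizing sequence
  have hseq : ∀ n : ℕ, ∃ x : X, supDist B x < r + 1 / (n + 1) := by
    intro n
    have hlt : r < r + 1 / (n + 1 : ℝ) := by
      have : (0:ℝ) < 1 / (n + 1) := by positivity
      linarith
    have : (⨅ x : X, supDist B x) < r + 1 / (n + 1 : ℝ) := by
      rw [hrdef, circumradius] at hlt ⊢; exact hlt
    exact exists_lt_of_ciInf_lt this
  choose u hu using hseq
  -- Cauchy
  have hu0 : ∀ n : ℕ, 0 ≤ supDist B (u n) := fun n => supDist_nonneg' B (u n)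
  have hcauchy : CauchySeq u := by
    refine cauchySeq_of_le_tendsto_0
      (fun N => Real.sqrt (8 * r * (1 / (N + 1)) + 4 * (1 / (N + 1)) ^ 2)) ?_ ?_
    · intro n m N hn hm
      have hNn : (1 : ℝ) / (n + 1) ≤ 1 / (N + 1) := by
        apply one_div_le_one_div_of_le (by positivity)
        have : (N : ℝ) ≤ n := Nat.cast_le.mpr hn
        linarith
      have hNm : (1 : ℝ) / (m + 1) ≤ 1 / (N + 1) := by
        apply one_div_le_one_div_of_le (by positivity)
        have : (N : ℝ) ≤ m := Nat.cast_le.mpr hm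
        linarith
      have key := key_ineq hX hne hbd (u n) (u m)
      rw [← hrdef] at key
      have hn' := hu n
      have hm' := hu m
      have hsq : dist (u n) (u m) ^ 2 ≤ 8 * r * (1 / (N + 1)) + 4 * (1 / (N + 1)) ^ 2 := by
        nlinarith [hu0 n, hu0 m, hr0, sq_nonneg (1 / ((N:ℝ) + 1)),
          sq_nonneg (supDist B (u n) - r), sq_nonneg (supDist B (u m) - r)]
      exact Real.le_sqrt_of_sq_le hsq
    · have h1 : Filter.Tendsto (fun N : ℕ => (1 : ℝ) / (N + 1)) Filter.atTop (nhds 0) :=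
        tendsto_one_div_add_atTop_nhds_zero_nat
      have h2 : Filter.Tendsto
          (fun N : ℕ => 8 * r * (1 / (N + 1)) + 4 * (1 / (N + 1)) ^ 2)
          Filter.atTop (nhds (8 * r * 0 + 4 * 0 ^ 2)) := by
        exact ((h1.const_mul (8 * r)).add ((h1.pow 2).const_mul 4))
      simp only [mul_zero, zero_pow, add_zero, ne_eq, OfNat.ofNat_ne_zero,
        not_false_eq_true] at h2
      have := h2.sqrt
      simpa [Real.sqrt_zero] using this
  obtain ⟨x, hx⟩ := cauchySeq_tendsto_of_complete hcauchy
  -- x is a circumcenter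
  have hcc : IsCircumcenter B x := by
    intro y hy
    have hdx : Filter.Tendsto (fun n => dist x (u n)) Filter.atTop (nhds 0) := by
      have := (tendsto_const_nhds (x := x) (f := Filter.atTop (α := ℕ))).dist hx
      simpa using this
    have hT : Filter.Tendsto (fun n : ℕ => dist x (u n) + (r + 1 / (n + 1)))
        Filter.atTop (nhds (0 + (r + 0))) := by
      exact hdx.add (tendsto_const_nhds.add tendsto_one_div_add_atTop_nhds_zero_nat)
    rw [zero_add, add_zero] at hT
    refine ge_of_tendsto hT ?_
    refine Filter.Eventually.of_forall fun n => ?_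
    have h1 : dist x y ≤ dist x (u n) + dist (u n) y := dist_triangle x (u n) y
    have h2 : dist (u n) y ≤ supDist B (u n) := dist_le_supDist hbd hy (u n)
    have h3 := (hu n).le
    linarith
  refine ⟨x, hcc, fun x' hx' => ?_⟩
  -- uniqueness
  have hs : supDist B x ≤ r := supDist_le hne hcc
  have hs' : supDist B x' ≤ r := supDist_le hne hx'
  have key := key_ineq hX hne hbd x' x
  rw [← hrdef] at key
  have : dist x' x = 0 := by
    nlinarith [dist_nonneg (x := x') (y := x), supDist_nonneg' B x, supDist_nonneg' B x']
  exact dist_eq_zero.mp this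
end

section
/- Let (X,d) be a metric space satisfying the semiparallelogram law and let B ⊆ X be nonempty and bounded. If (ξ_n) is a sequence in X with sup_{y∈B} d(ξ_n, y)^2 ≤ r(B)^2 + 1/n for all n, then (ξ_n) is a Cauchy sequence. -/
open Metric

variable {X : Type*} [MetricSpace X]

/-- A minimizing sequence for the circumradius is Cauchy. -/
theorem stmt1 (hX : SemiparLaw X) (B : Set X) (hne : B.Nonempty)
    (hbd : Bornology.IsBounded B) (ξ : ℕ → X)
    (hξ : ∀ n : ℕ, 0 < n → ∀ y ∈ B, dist (ξ n) y ^ 2 ≤ circumradius B ^ 2 + 1 / n) :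
    CauchySeq ξ := by
  haveI : Nonempty X := ⟨ξ 0⟩
  haveI : Nonempty B := hne.to_subtype
  set r := circumradius B with hrdef
  have hr0 : 0 ≤ r :=
    le_ciInf fun x => Real.iSup_nonneg fun y => dist_nonneg
  have key : ∀ m n : ℕ, 0 < m → 0 < n →
      dist (ξ m) (ξ n) ^ 2 ≤ 2 * (1 / m) + 2 * (1 / n) := by
    intro m n hm hn
    obtain ⟨z, hz⟩ := hX (ξ m) (ξ n)
    have hzr : r ≤ supDist B z := by
      refine ciInf_le ⟨0, ?_⟩ z
      rintro a ⟨x, rfl⟩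
      exact Real.iSup_nonneg fun y => dist_nonneg
    have main : ∀ ε : ℝ, 0 < ε →
        dist (ξ m) (ξ n) ^ 2 ≤ 2 * (1 / m) + 2 * (1 / n) + 8 * r * ε := by
      intro ε hε
      have hlt : r - ε < ⨆ y : B, dist z (y : X) :=
        lt_of_lt_of_le (by linarith) hzr
      obtain ⟨y, hy⟩ := exists_lt_of_lt_ciSup hlt
      have h1 := hξ m hm y y.2
      have h2 := hξ n hn y y.2
      have h3 := hz (y : X)
      have hd2 : r ^ 2 - 2 * r * ε ≤ dist z (y : X) ^ 2 := by
        rcases le_or_gt (r - ε) 0 with h | h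
        · nlinarith [dist_nonneg (x := z) (y := (y : X)),
            sq_nonneg (dist z (y : X))]
        · nlinarith
      have e1 : dist (y : X) (ξ m) = dist (ξ m) (y : X) := dist_comm _ _
      have e2 : dist (y : X) (ξ n) = dist (ξ n) (y : X) := dist_comm _ _
      rw [e1, e2] at h3
      linarith [h1, h2, h3, hd2]
    refine le_of_forall_pos_le_add fun ε hε => ?_
    rcases hr0.eq_or_lt with h | h
    · have := main 1 one_pos
      rw [← h] at this
      linarith
    · have h8 : (0:ℝ) < 8 * r := by linarith
      have := main (ε / (8 * r)) (by positivity)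
      have heq : 8 * r * (ε / (8 * r)) = ε := by field_simp
      linarith [this, heq.le, heq.ge]
  rw [Metric.cauchySeq_iff]
  intro ε hε
  obtain ⟨M, hM⟩ := exists_nat_gt (4 / ε ^ 2)
  set N : ℕ := max 1 M with hN
  refine ⟨N, fun m hm n hn => ?_⟩
  have hN1 : 1 ≤ N := le_max_left _ _
  have hm1 : 0 < m := lt_of_lt_of_le hN1 hm
  have hn1 : 0 < n := lt_of_lt_of_le hN1 hn
  have hNpos : (0:ℝ) < N := by exact_mod_cast lt_of_lt_of_le one_pos hN1
  have hNbig : 4 / ε ^ 2 < N := by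
    have h2 : (M : ℝ) ≤ N := by exact_mod_cast le_max_right 1 M
    linarith
  have h4N : 4 * (1 / (N : ℝ)) < ε ^ 2 := by
    rw [mul_one_div, div_lt_iff₀ hNpos]
    rw [div_lt_iff₀ (by positivity : (0:ℝ) < ε ^ 2)] at hNbig
    linarith
  have hk := key m n hm1 hn1
  have hmN : 1 / (m:ℝ) ≤ 1 / (N:ℝ) :=
    one_div_le_one_div_of_le hNpos (by exact_mod_cast hm)
  have hnN : 1 / (n:ℝ) ≤ 1 / (N:ℝ) :=
    one_div_le_one_div_of_le hNpos (by exact_mod_cast hn)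
  have hsq : dist (ξ m) (ξ n) ^ 2 < ε ^ 2 := by linarith
  nlinarith [dist_nonneg (x := ξ m) (y := ξ n)]
end

section
/- In a complete metric space satisfying the semiparallelogram law, if x and x' are two circumcenters of a nonempty bounded set B, then x = x'. -/
open Metric

variable {X : Type*} [MetricSpace X]

/-- Uniqueness of circumcenters in complete spaces with the semiparallelogram law. -/
theorem stmt2 [CompleteSpace X] (hX : SemiparLaw X) (B : Set X) (hne : B.Nonempty)
    (hbd : Bornology.IsBounded B) (x x' : X)
    (hx : IsCircumcenter B x) (hx' : IsCircumcenter B x') : x = x' := by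
  by_contra hxx
  have hd : 0 < dist x x' := dist_pos.2 hxx
  obtain ⟨z, hz⟩ := hX x x'
  set r := circumradius B with hr
  have hbdd : ∀ c : X, BddAbove (Set.range fun y : B => dist c (y : X)) := by
    intro c
    obtain ⟨R, hR⟩ := hbd.subset_closedBall c
    refine ⟨R, ?_⟩
    rintro _ ⟨y, rfl⟩
    simpa [dist_comm] using hR y.2
  haveI : Nonempty B := hne.to_subtype
  haveI : Nonempty X := ⟨hne.choose⟩
  have hsup_nonneg : ∀ c : X, 0 ≤ supDist B c := by
    intro c
    obtain ⟨y0, hy0⟩ := hne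
    exact le_trans dist_nonneg (le_ciSup (hbdd c) ⟨y0, hy0⟩)
  have hr0 : 0 ≤ r := le_ciInf hsup_nonneg
  have key : ∀ y ∈ B, dist z y ^ 2 ≤ r ^ 2 - dist x x' ^ 2 / 4 := by
    intro y hy
    have h1 := hz y
    have h2 := hx y hy
    have h3 := hx' y hy
    have h2' : dist y x ≤ r := by rwa [dist_comm]
    have h3' : dist y x' ≤ r := by rwa [dist_comm]
    nlinarith [dist_nonneg (x := y) (y := x), dist_nonneg (x := y) (y := x')]
  have harg : 0 ≤ r ^ 2 - dist x x' ^ 2 / 4 := by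
    obtain ⟨y0, hy0⟩ := hne
    exact le_trans (sq_nonneg _) (key y0 hy0)
  have hsz : supDist B z ≤ Real.sqrt (r ^ 2 - dist x x' ^ 2 / 4) := by
    refine ciSup_le fun y => ?_
    rw [← Real.sqrt_sq (dist_nonneg (x := z) (y := (y : X)))]
    exact Real.sqrt_le_sqrt (key y y.2)
  have hrz : r ≤ supDist B z := ciInf_le ⟨0, by rintro _ ⟨c, rfl⟩; exact hsup_nonneg c⟩ z
  have hle : r ≤ Real.sqrt (r ^ 2 - dist x x' ^ 2 / 4) := le_trans hrz hsz
  nlinarith [Real.sq_sqrt harg, Real.sqrt_nonneg (r ^ 2 - dist x x' ^ 2 / 4)]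
end

section
/- Let (X,d) be a metric space satisfying the semiparallelogram law and B ⊆ X nonempty bounded. For any x ∈ X and any circumcenter σ of B, one has d(x, σ)^2 ≤ 2 (sup_{y∈B} d(x,y))^2 - 2 r(B)^2, where r(B) is the circumradius of B. -/
open Metric

variable {X : Type*} [MetricSpace X]

/-- Distance from any point to the circumcenter is controlled. -/
theorem stmt5 (hX : SemiparLaw X) (B : Set X) (hne : B.Nonempty)
    (hbd : Bornology.IsBounded B) (σ : X) (hσ : IsCircumcenter B σ) (x : X) :
    dist x σ ^ 2 ≤ 2 * supDist B x ^ 2 - 2 * circumradius B ^ 2 := by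
  obtain ⟨z, hz⟩ := hX x σ
  set r := circumradius B with hr
  have hneB : Nonempty B := hne.to_subtype
  -- bddAbove of distances from any point
  have hbdd : ∀ w : X, BddAbove (Set.range fun y : B => dist w (y : X)) := by
    intro w
    obtain ⟨C, hC⟩ := hbd.subset_closedBall w
    exact ⟨C, by rintro v ⟨y, rfl⟩; simpa [dist_comm] using hC y.2⟩
  have : Nonempty X := ⟨x⟩
  have hrnn : (0:ℝ) ≤ r := by
    apply le_ciInf
    intro w
    exact Real.iSup_nonneg fun _ => dist_nonneg
  have hrz : r ≤ supDist B z := by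
    apply ciInf_le
    exact ⟨0, by rintro v ⟨w, rfl⟩; exact Real.iSup_nonneg fun _ => dist_nonneg⟩
  -- main ε argument
  rw [show 2 * supDist B x ^ 2 - 2 * r ^ 2 =
      (2 * supDist B x ^ 2 - 2 * r ^ 2) from rfl]
  refine le_of_forall_pos_le_add (fun ε hε => ?_)
  set ε' := ε / (8 * r + 1) with hε'
  have hε'pos : 0 < ε' := div_pos hε (by linarith)
  have hmul : ε' * (8 * r + 1) = ε := div_mul_cancel₀ ε (by linarith)
  have h8 : 8 * r * ε' ≤ ε := by nlinarith
  -- find y with dist z y > supDist B z - ε' ≥ r - ε'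
  obtain ⟨y, hy⟩ := exists_lt_of_lt_ciSup
    (show supDist B z - ε' < ⨆ y : B, dist z (y : X) by
      have : supDist B z - ε' < supDist B z := by linarith
      exact this)
  have hy1 : r - ε' < dist z (y : X) := lt_of_le_of_lt (by linarith) hy
  have hy2 : dist (y : X) x ≤ supDist B x := by
    rw [dist_comm]
    exact le_ciSup (hbdd x) y
  have hy3 : dist (y : X) σ ≤ r := by rw [dist_comm]; exact hσ y y.2
  have hkey := hz (y : X)
  have hd0 : (0:ℝ) ≤ dist z (y : X) := dist_nonneg
  have hsq : r ^ 2 - 2 * r * ε' ≤ dist z (y : X) ^ 2 := by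
    nlinarith [sq_nonneg (dist z (y:X) - (r - ε')), sq_nonneg ε']
  have hyσnn : (0:ℝ) ≤ dist (y:X) σ := dist_nonneg
  have hyxnn : (0:ℝ) ≤ dist (y:X) x := dist_nonneg
  nlinarith [sq_nonneg (supDist B x - dist (y:X) x)]
end

section
/- Let M_n(ℂ) with normalized trace τ and c > 1. On the set GL_c := { x positive definite : (1/c) I ≤ x ≤ c I }, the metric d(a,b) = ‖log(a^{-1/2} b a^{-1/2})‖_2 is bi-Lipschitz equivalent to the metric induced by the norm ‖a - b‖_2, i.e., there exist constants 0 < k ≤ K (depending only on c) with k‖a-b‖_2 ≤ d(a,b) ≤ K‖a-b‖_2 for all a, b ∈ GL_c. -/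
open scoped Matrix.Norms.L2Operator

open Matrix ComplexOrder

variable {n : ℕ}

/-- The normalized trace on `n × n` complex matrices. -/
noncomputable def normTrace (x : Matrix (Fin n) (Fin n) ℂ) : ℂ := Matrix.trace x / n

/-- The `L²`-norm `τ(x* x)^{1/2}` coming from the normalized trace. -/
noncomputable def l2normM (x : Matrix (Fin n) (Fin n) ℂ) : ℝ :=
  Real.sqrt (normTrace (xᴴ * x)).re

/-- The positive square root of a positive definite matrix (via continuous functional
calculus, using the `L²`-operator norm C*-structure on matrices). -/
noncomputable def matSqrt (a : Matrix (Fin n) (Fin n) ℂ) : Matrix (Fin n) (Fin n) ℂ :=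
  cfc Real.sqrt a

/-- The distance `d(a,b) = ‖log (a⁻¹ᐟ² b a⁻¹ᐟ²)‖₂` on positive definite matrices, where
`log` is the logarithm of positive definite matrices. -/
noncomputable def pdDist (a b : Matrix (Fin n) (Fin n) ℂ) : ℝ :=
  l2normM (CFC.log ((matSqrt a)⁻¹ * b * (matSqrt a)⁻¹))

/-- Membership in `GL_c`, i.e. `x` is positive definite with `(1/c) I ≤ x ≤ c I` in the
Loewner order. -/
def memGLc (c : ℝ) (x : Matrix (Fin n) (Fin n) ℂ) : Prop :=
  x.PosDef ∧ (x - (c⁻¹ : ℂ) • 1).PosSemidef ∧ ((c : ℂ) • 1 - x).PosSemidef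

/-!
Put `s = a^{1/2}`, `m = a^{-1/2} b a^{-1/2}` and `w = 1 - m`, so that `a - b = s w s` and
`d(a, b) = ‖log m‖₂`. From `c⁻¹ ≤ a, b ≤ c` the spectrum of `m` lies in `[c⁻², c²]`, where
`|log t|` and `|t - 1|` agree up to the factor `c²`; by the functional calculus
`(log m)² ≤ c⁴ w²` and `w² ≤ c⁴ (log m)²`. On the other side `τ((a - b)²) = τ(w a w a)` lies
between `c⁻² τ(w²)` and `c² τ(w²)`, so both Lipschitz constants can be taken to be `c³`.
-/

open Real
open scoped MatrixOrder

lemma abs_log_le_mul_abs_sub_one {L t : ℝ} (hL : 1 ≤ L) (ht : L⁻¹ ≤ t) :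
    |log t| ≤ L * |t - 1| := by
  have ht0 : 0 < t := lt_of_lt_of_le (by positivity) ht
  rcases le_total 1 t with h | h
  · rw [abs_of_nonneg (log_nonneg h), abs_of_nonneg (by linarith)]
    nlinarith [log_le_sub_one_of_pos ht0]
  · rw [abs_of_nonpos (log_nonpos ht0.le h), abs_of_nonpos (by linarith)]
    have hlog : -log t ≤ t⁻¹ - 1 := by
      simpa [log_inv] using log_le_sub_one_of_pos (inv_pos.mpr ht0)
    have hinv : t⁻¹ * (1 - t) ≤ L * (1 - t) := by
      gcongr
      exact (inv_le_comm₀ (by positivity) ht0).mp ht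
    have hfac : t⁻¹ - 1 = t⁻¹ * (1 - t) := by field_simp
    linarith

lemma abs_sub_one_le_mul_abs_log {L t : ℝ} (hL : 1 ≤ L) (ht0 : 0 < t) (ht : t ≤ L) :
    |t - 1| ≤ L * |log t| := by
  rcases le_total 1 t with h | h
  · rw [abs_of_nonneg (log_nonneg h), abs_of_nonneg (by linarith)]
    have hlog : 1 - t⁻¹ ≤ log t := one_sub_inv_le_log_of_pos ht0
    have hfac : t * (1 - t⁻¹) = t - 1 := by field_simp
    nlinarith [log_nonneg h]
  · rw [abs_of_nonpos (log_nonpos ht0.le h), abs_of_nonpos (by linarith)]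
    nlinarith [log_le_sub_one_of_pos ht0, log_nonpos ht0.le h]

lemma continuousOn_inv_sqrt {s : Set ℝ} (h : ∀ t ∈ s, 0 < t) :
    ContinuousOn (fun t => (√t)⁻¹) s :=
  continuous_sqrt.continuousOn.inv₀ fun t ht => (sqrt_pos.2 (h t ht)).ne'

section CFC

variable {A : Type*} [Ring A] [StarRing A] [TopologicalSpace A] [Algebra ℝ A]
  [ContinuousFunctionalCalculus ℝ A IsSelfAdjoint] {a m : A}

lemma cfc_sqrt_mul_self (ha : IsSelfAdjoint a) (h : ∀ t ∈ spectrum ℝ a, 0 ≤ t) :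
    cfc sqrt a * cfc sqrt a = a := by
  conv_rhs => rw [← cfc_id' ℝ a]
  rw [← cfc_mul ..]
  exact cfc_congr fun t ht => mul_self_sqrt (h t ht)

lemma cfc_sqrt_mul_cfc_inv_sqrt (ha : IsSelfAdjoint a) (h : ∀ t ∈ spectrum ℝ a, 0 < t) :
    cfc sqrt a * cfc (fun t => (√t)⁻¹) a = 1 := by
  rw [← cfc_mul _ _ a (by fun_prop) (continuousOn_inv_sqrt h), ← cfc_const_one ℝ a]
  exact cfc_congr fun t ht => mul_inv_cancel₀ (sqrt_pos.2 (h t ht)).ne'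

lemma cfc_inv_sqrt_mul_cfc_sqrt (ha : IsSelfAdjoint a) (h : ∀ t ∈ spectrum ℝ a, 0 < t) :
    cfc (fun t => (√t)⁻¹) a * cfc sqrt a = 1 := by
  rw [← cfc_mul _ _ a (continuousOn_inv_sqrt h) (by fun_prop), ← cfc_const_one ℝ a]
  exact cfc_congr fun t ht => inv_mul_cancel₀ (sqrt_pos.2 (h t ht)).ne'

lemma cfc_inv_sqrt_mul_self (h : ∀ t ∈ spectrum ℝ a, 0 < t) :
    cfc (fun t => (√t)⁻¹) a * cfc (fun t => (√t)⁻¹) a = cfc (fun t : ℝ => t⁻¹) a := by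
  rw [← cfc_mul _ _ a (continuousOn_inv_sqrt h) (continuousOn_inv_sqrt h)]
  exact cfc_congr fun t ht => by rw [← mul_inv, mul_self_sqrt (h t ht).le]

lemma one_sub_sq_eq_cfc (hm : IsSelfAdjoint m) :
    (1 - m) ^ 2 = cfc (fun t : ℝ => (1 - t) ^ 2) m := by
  rw [cfc_pow (fun t : ℝ => 1 - t) 2 m, cfc_sub (fun _ => (1 : ℝ)) (fun t => t) m, cfc_id' ℝ m,
    cfc_const_one ℝ m]

lemma cfc_log_sq_eq_cfc (hm : IsSelfAdjoint m) (hpos : ∀ t ∈ spectrum ℝ m, 0 < t) :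
    cfc log m ^ 2 = cfc (fun t : ℝ => log t ^ 2) m :=
  (cfc_pow log 2 m (continuousOn_log.mono fun t ht => (hpos t ht).ne')).symm

section Order

variable [PartialOrder A] [StarOrderedRing A] [NonnegSpectrumClass ℝ A]

lemma spectrum_subset_Icc_of_le (ha : IsSelfAdjoint a) {r s : ℝ}
    (hr : algebraMap ℝ A r ≤ a) (hs : a ≤ algebraMap ℝ A s) :
    spectrum ℝ a ⊆ Set.Icc r s := fun t ht =>
  ⟨(algebraMap_le_iff_le_spectrum ha).mp hr t ht, (le_algebraMap_iff_spectrum_le ha).mp hs t ht⟩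

lemma conj_cfc_inv_sqrt_mem_Icc {b : A} {c : ℝ} (hc : 0 < c) (ha : IsSelfAdjoint a)
    (ha₁ : algebraMap ℝ A c⁻¹ ≤ a) (ha₂ : a ≤ algebraMap ℝ A c)
    (hb₁ : algebraMap ℝ A c⁻¹ ≤ b) (hb₂ : b ≤ algebraMap ℝ A c) :
    cfc (fun t => (√t)⁻¹) a * b * cfc (fun t => (√t)⁻¹) a ∈
      Set.Icc (algebraMap ℝ A (c ^ 2)⁻¹) (algebraMap ℝ A (c ^ 2)) := by
  set r := cfc (fun t => (√t)⁻¹) a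
  have hspec := spectrum_subset_Icc_of_le ha ha₁ ha₂
  have hpos : ∀ t ∈ spectrum ℝ a, 0 < t := fun t ht => (inv_pos.2 hc).trans_le (hspec ht).1
  have hr : IsSelfAdjoint r := cfc_predicate _ a
  have hinv : ContinuousOn (fun t : ℝ => t⁻¹) (spectrum ℝ a) :=
    continuousOn_inv₀.mono fun t ht => (hpos t ht).ne'
  have hconj (x : ℝ) : r * algebraMap ℝ A x * r = cfc (fun t => x * t⁻¹) a := by
    rw [← Algebra.commutes, mul_assoc, cfc_inv_sqrt_mul_self hpos, ← Algebra.smul_def,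
      ← cfc_smul x _ a hinv]
    rfl
  constructor
  · refine le_trans ?_ (hr.conjugate_le_conjugate hb₁)
    rw [hconj, algebraMap_le_cfc_iff (fun t => c⁻¹ * t⁻¹) _ a (continuousOn_const.mul hinv)]
    intro t ht
    rw [sq, mul_inv]
    exact mul_le_mul_of_nonneg_left (inv_anti₀ (hpos t ht) (hspec ht).2) (by positivity)
  · refine le_trans (hr.conjugate_le_conjugate hb₂) ?_
    rw [hconj, cfc_le_algebraMap_iff (fun t => c * t⁻¹) _ a (continuousOn_const.mul hinv)]
    intro t ht
    rw [sq]
    exact mul_le_mul_of_nonneg_left (inv_le_of_inv_le₀ (by positivity) (hspec ht).1) hc.le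

variable {L : ℝ}

lemma cfc_log_sq_le_smul_one_sub_sq (hL : 1 ≤ L) (hm : IsSelfAdjoint m)
    (hspec : spectrum ℝ m ⊆ Set.Icc L⁻¹ L) : cfc log m ^ 2 ≤ L ^ 2 • (1 - m) ^ 2 := by
  have hpos : ∀ t ∈ spectrum ℝ m, 0 < t := fun t ht =>
    lt_of_lt_of_le (by positivity) (hspec ht).1
  have hlog : ContinuousOn (fun t => log t ^ 2) (spectrum ℝ m) :=
    (continuousOn_log.mono fun t ht => (hpos t ht).ne').pow 2
  rw [cfc_log_sq_eq_cfc hm hpos, one_sub_sq_eq_cfc hm, ← cfc_smul .., cfc_le_iff _ _ m hlog]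
  intro t ht
  have := pow_le_pow_left₀ (abs_nonneg _) (abs_log_le_mul_abs_sub_one hL (hspec ht).1) 2
  rwa [sq_abs, mul_pow, sq_abs, ← neg_sub, neg_sq] at this

lemma one_sub_sq_le_smul_cfc_log_sq (hL : 1 ≤ L) (hm : IsSelfAdjoint m)
    (hspec : spectrum ℝ m ⊆ Set.Icc L⁻¹ L) : (1 - m) ^ 2 ≤ L ^ 2 • cfc log m ^ 2 := by
  have hpos : ∀ t ∈ spectrum ℝ m, 0 < t := fun t ht =>
    lt_of_lt_of_le (by positivity) (hspec ht).1
  have hlog : ContinuousOn (fun t => log t ^ 2) (spectrum ℝ m) :=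
    (continuousOn_log.mono fun t ht => (hpos t ht).ne').pow 2
  rw [cfc_log_sq_eq_cfc hm hpos, one_sub_sq_eq_cfc hm, ← cfc_smul (L ^ 2) _ m hlog,
    cfc_le_iff (fun t => (1 - t) ^ 2) (fun t => L ^ 2 • log t ^ 2) m (by fun_prop)
    (continuousOn_const.mul hlog)]
  intro t ht
  have := pow_le_pow_left₀ (abs_nonneg _)
    (abs_sub_one_le_mul_abs_log hL (hpos t ht) (hspec ht).2) 2
  rwa [sq_abs, mul_pow, sq_abs, ← neg_sub, neg_sq] at this

end Order

end CFC

namespace Matrix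

variable {ι : Type*} [Fintype ι] {P w x y : Matrix ι ι ℂ}

lemma re_trace_mono (h : x ≤ y) : x.trace.re ≤ y.trace.re := by
  have := (Complex.le_def.mp (le_iff.mp h).trace_nonneg).1
  rw [trace_sub, Complex.sub_re, Complex.zero_re] at this
  linarith

variable [DecidableEq ι]

lemma re_trace_mul_mono (hP : 0 ≤ P) (h : x ≤ y) : (P * x).trace.re ≤ (P * y).trace.re := by
  obtain ⟨B, rfl⟩ := CStarAlgebra.nonneg_iff_eq_star_mul_self.mp hP
  rw [← trace_mul_cycle B x, ← trace_mul_cycle B y]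
  exact re_trace_mono (star_right_conjugate_le_conjugate h B)

lemma re_trace_mul_algebraMap (P : Matrix ι ι ℂ) (r : ℝ) :
    (P * algebraMap ℝ _ r).trace.re = r * P.trace.re := by
  rw [← Algebra.commutes, ← Algebra.smul_def, trace_smul, Complex.smul_re, smul_eq_mul]

lemma re_trace_conj_mul_le {a : Matrix ι ι ℂ} {s : ℝ} (hw : IsSelfAdjoint w) (ha : 0 ≤ a)
    (hs : 0 ≤ s) (has : a ≤ algebraMap ℝ _ s) :
    (w * a * w * a).trace.re ≤ s ^ 2 * (w * w).trace.re :=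
  calc (w * a * w * a).trace.re ≤ (w * a * w * algebraMap ℝ _ s).trace.re :=
        re_trace_mul_mono (hw.conjugate_nonneg ha) has
    _ = s * (w * w * a).trace.re := by rw [re_trace_mul_algebraMap, trace_mul_cycle w a w]
    _ ≤ s * (w * w * algebraMap ℝ _ s).trace.re :=
        mul_le_mul_of_nonneg_left (re_trace_mul_mono hw.mul_self_nonneg has) hs
    _ = s ^ 2 * (w * w).trace.re := by rw [re_trace_mul_algebraMap]; ring

lemma le_re_trace_conj_mul {a : Matrix ι ι ℂ} {r : ℝ} (hw : IsSelfAdjoint w) (hr : 0 ≤ r)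
    (hra : algebraMap ℝ _ r ≤ a) :
    r ^ 2 * (w * w).trace.re ≤ (w * a * w * a).trace.re := by
  have ha : 0 ≤ a := (algebraMap_nonneg _ hr).trans hra
  calc r ^ 2 * (w * w).trace.re = r * (w * w * algebraMap ℝ _ r).trace.re := by
        rw [re_trace_mul_algebraMap]; ring
    _ ≤ r * (w * w * a).trace.re :=
        mul_le_mul_of_nonneg_left (re_trace_mul_mono hw.mul_self_nonneg hra) hr
    _ = (w * a * w * algebraMap ℝ _ r).trace.re := by
        rw [re_trace_mul_algebraMap, trace_mul_cycle w a w]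
    _ ≤ (w * a * w * a).trace.re := re_trace_mul_mono (hw.conjugate_nonneg ha) hra

end Matrix

lemma memGLc_iff {c : ℝ} {x : Matrix (Fin n) (Fin n) ℂ} :
    memGLc c x ↔ x.PosDef ∧ algebraMap ℝ _ c⁻¹ ≤ x ∧ x ≤ algebraMap ℝ _ c := by
  have h (r : ℝ) : algebraMap ℝ (Matrix (Fin n) (Fin n) ℂ) r = (r : ℂ) • 1 := by
    rw [Algebra.algebraMap_eq_smul_one]; exact (Complex.coe_smul r 1).symm
  simp only [memGLc, le_iff, h, Complex.ofReal_inv]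

lemma l2normM_le_mul_of_re_trace_le {x y : Matrix (Fin n) (Fin n) ℂ} {C : ℝ} (hC : 0 ≤ C)
    (h : (xᴴ * x).trace.re ≤ C ^ 2 * (yᴴ * y).trace.re) : l2normM x ≤ C * l2normM y := by
  simp only [l2normM, normTrace, Complex.div_natCast_re]
  rw [← sqrt_sq hC, ← sqrt_mul (sq_nonneg C), mul_div_assoc']
  exact sqrt_le_sqrt (div_le_div_of_nonneg_right h n.cast_nonneg)

lemma exists_sub_eq_conj_of_memGLc {c : ℝ} (hc : 0 < c) {a b : Matrix (Fin n) (Fin n) ℂ}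
    (ha : memGLc c a) (hb : memGLc c b) :
    ∃ m s : Matrix (Fin n) (Fin n) ℂ, IsSelfAdjoint m ∧
      spectrum ℝ m ⊆ Set.Icc (c ^ 2)⁻¹ (c ^ 2) ∧ s * s = a ∧ a - b = s * (1 - m) * s ∧
      pdDist a b = l2normM (cfc log m) := by
  obtain ⟨hapd, ha₁, ha₂⟩ := memGLc_iff.mp ha
  obtain ⟨hbpd, hb₁, hb₂⟩ := memGLc_iff.mp hb
  have hsa : IsSelfAdjoint a := hapd.isHermitian.isSelfAdjoint
  have hpos : ∀ t ∈ spectrum ℝ a, 0 < t := fun t ht =>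
    (inv_pos.2 hc).trans_le (spectrum_subset_Icc_of_le hsa ha₁ ha₂ ht).1
  set r := cfc (fun t => (√t)⁻¹) a
  have hrs : r * matSqrt a = 1 := cfc_inv_sqrt_mul_cfc_sqrt hsa hpos
  have hsr : matSqrt a * r = 1 := cfc_sqrt_mul_cfc_inv_sqrt hsa hpos
  have hss : matSqrt a * matSqrt a = a := cfc_sqrt_mul_self hsa fun t ht => (hpos t ht).le
  have hm : IsSelfAdjoint (r * b * r) := by
    have hr : IsSelfAdjoint r := cfc_predicate _ a
    simpa only [hr.star_eq] using hbpd.isHermitian.isSelfAdjoint.conjugate r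
  obtain ⟨hm₁, hm₂⟩ := conj_cfc_inv_sqrt_mem_Icc hc hsa ha₁ ha₂ hb₁ hb₂
  refine ⟨r * b * r, matSqrt a, hm, spectrum_subset_Icc_of_le hm hm₁ hm₂, hss, ?_, ?_⟩
  · calc a - b = matSqrt a * matSqrt a - (matSqrt a * r) * b * (r * matSqrt a) := by
          rw [hss, hsr, hrs, one_mul, mul_one]
      _ = matSqrt a * (1 - r * b * r) * matSqrt a := by noncomm_ring
  · rw [pdDist, inv_eq_left_inv hrs]
    rfl

lemma pdDist_le_and_l2normM_sub_le {c : ℝ} (hc : 1 ≤ c) {a b : Matrix (Fin n) (Fin n) ℂ}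
    (ha : memGLc c a) (hb : memGLc c b) :
    pdDist a b ≤ c ^ 3 * l2normM (a - b) ∧ l2normM (a - b) ≤ c ^ 3 * pdDist a b := by
  have hc0 : 0 < c := zero_lt_one.trans_le hc
  obtain ⟨m, s, hm, hspec, hss, hab, hdist⟩ := exists_sub_eq_conj_of_memGLc hc0 ha hb
  obtain ⟨hapd, ha₁, ha₂⟩ := memGLc_iff.mp ha
  have hab_herm : (a - b)ᴴ = a - b := (hapd.isHermitian.sub (memGLc_iff.mp hb).1.isHermitian).eq
  have hw : IsSelfAdjoint (1 - m) := .sub (.one _) hm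
  have hD : ((a - b)ᴴ * (a - b)).trace.re = ((1 - m) * a * (1 - m) * a).trace.re := by
    have hassoc : s * (1 - m) * s * (s * (1 - m) * s) = s * ((1 - m) * (s * s) * (1 - m) * s) := by
      simp only [mul_assoc]
    rw [hab_herm, hab, hassoc, trace_mul_comm, mul_assoc ((1 - m) * (s * s) * (1 - m)) s s, hss]
  have hL : (cfc log m)ᴴ * cfc log m = cfc log m ^ 2 := by
    rw [sq, ← star_eq_conjTranspose, (cfc_predicate log m : IsSelfAdjoint _).star_eq]
  have hc2 : 1 ≤ c ^ 2 := one_le_pow₀ hc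
  have h1 := re_trace_mono (cfc_log_sq_le_smul_one_sub_sq hc2 hm hspec)
  have h2 := re_trace_mono (one_sub_sq_le_smul_cfc_log_sq hc2 hm hspec)
  have h3 := re_trace_conj_mul_le hw hapd.posSemidef.nonneg hc0.le ha₂
  have h4 := le_re_trace_conj_mul hw (inv_nonneg.2 hc0.le) ha₁
  simp only [trace_smul, Complex.smul_re, smul_eq_mul, ← sq] at h1 h2 h3 h4
  set T := (cfc log m ^ 2).trace.re
  set W := ((1 - m) ^ 2).trace.re
  set D := ((1 - m) * a * (1 - m) * a).trace.re
  have hWD : W ≤ c ^ 2 * D := by rwa [inv_pow, inv_mul_le_iff₀ (by positivity)] at h4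
  rw [hdist]
  constructor <;> apply l2normM_le_mul_of_re_trace_le (by positivity) <;> rw [hL, hD]
  · calc T ≤ (c ^ 2) ^ 2 * W := h1
      _ ≤ (c ^ 2) ^ 2 * (c ^ 2 * D) := by gcongr
      _ = (c ^ 3) ^ 2 * D := by ring
  · calc D ≤ c ^ 2 * W := h3
      _ ≤ c ^ 2 * ((c ^ 2) ^ 2 * T) := by gcongr
      _ = (c ^ 3) ^ 2 * T := by ring

theorem stmt10_general (c : ℝ) (hc : 1 < c) :
    ∃ k K : ℝ, 0 < k ∧ k ≤ K ∧
      ∀ a b : Matrix (Fin n) (Fin n) ℂ, memGLc c a → memGLc c b →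
        k * l2normM (a - b) ≤ pdDist a b ∧ pdDist a b ≤ K * l2normM (a - b) := by
  have hc3 : 1 ≤ c ^ 3 := one_le_pow₀ hc.le
  refine ⟨(c ^ 3)⁻¹, c ^ 3, by positivity, (inv_le_one_of_one_le₀ hc3).trans hc3,
    fun a b ha hb => ?_⟩
  obtain ⟨hdist, hl2⟩ := pdDist_le_and_l2normM_sub_le hc.le ha hb
  exact ⟨(inv_mul_le_iff₀ (by positivity)).2 hl2, hdist⟩

/-- On `GL_c`, the metric `d` is bi-Lipschitz equivalent to the metric induced by the
norm `‖·‖₂`. -/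
theorem stmt10 (hn : 0 < n) (c : ℝ) (hc : 1 < c) :
    ∃ k K : ℝ, 0 < k ∧ k ≤ K ∧
      ∀ a b : Matrix (Fin n) (Fin n) ℂ, memGLc c a → memGLc c b →
        k * l2normM (a - b) ≤ pdDist a b ∧ pdDist a b ≤ K * l2normM (a - b) :=
  stmt10_general c hc
end
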